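/- arXiv:2103.13331 — 5 statements merged into one kernel-verified Lean document; each statement's English description precedes it below -/
import Mathlib

section
/- Let 𝔯 be a relational database over schema R. A set U ⊆ R is an inclusion-wise minimal unique column combination of 𝔯 if and only if U is a minimal hitting set of the hypergraph of inclusion-wise minimal difference sets of 𝔯. -/
/-- A set `U` of attributes is a unique column combination (UCC) of the database `db`. -/
def IsUCC {R V : Type*} (db : Set (R → V)) (U : Set R) : Prop :=
  ∀ r ∈ db, ∀ s ∈ db, (∀ a ∈ U, r a = s a) → r = s

/-- `U` is an inclusion-wise minimal UCC of `db`. -/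
def IsMinUCC {R V : Type*} (db : Set (R → V)) (U : Set R) : Prop :=
  IsUCC db U ∧ ∀ U' ⊂ U, ¬ IsUCC db U'

/-- The difference set of two rows: the attributes on which they disagree. -/
def diffSet {R V : Type*} (r s : R → V) : Set R := {a | r a ≠ s a}

/-- The hypergraph of difference sets of pairs of distinct rows of `db`. -/
def diffSets {R V : Type*} (db : Set (R → V)) : Set (Set R) :=
  {D | ∃ r ∈ db, ∃ s ∈ db, r ≠ s ∧ D = diffSet r s}

/-- The hypergraph of inclusion-wise minimal difference sets of `db`. -/
def minDiffSets {R V : Type*} (db : Set (R → V)) : Set (Set R) :=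
  {D ∈ diffSets db | ∀ D' ∈ diffSets db, D' ⊆ D → D' = D}

/-- `T` is a hitting set of the hypergraph `H`: it intersects every edge. -/
def IsHittingSet {α : Type*} (H : Set (Set α)) (T : Set α) : Prop :=
  ∀ E ∈ H, (T ∩ E).Nonempty

/-- `T` is an inclusion-wise minimal hitting set of the hypergraph `H`. -/
def IsMinHittingSet {α : Type*} (H : Set (Set α)) (T : Set α) : Prop :=
  IsHittingSet H T ∧ ∀ T' ⊂ T, ¬ IsHittingSet H T'

/- Two rows differ exactly when their difference set is nonempty, so a set of attributes is a UCC
iff it meets every difference set. In a finite hypergraph every edge contains a minimal edge, so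
meeting every edge is the same as meeting every minimal edge; the two "minimal" notions then agree
because the underlying predicates do. -/

theorem isHittingSet_setOf_minimal_iff {α : Type*} {H : Set (Set α)} (hH : H.IsPWO)
    (T : Set α) : IsHittingSet {E | Minimal (· ∈ H) E} T ↔ IsHittingSet H T := by
  refine ⟨fun hT E hE => ?_, fun hT E hE => hT E hE.prop⟩
  obtain ⟨E', hE'E, hE'⟩ := hH.exists_le_minimal hE
  exact (hT E' hE').mono (Set.inter_subset_inter_right T hE'E)

theorem minDiffSets_eq_setOf_minimal {R V : Type*} (db : Set (R → V)) :
    minDiffSets db = {D | Minimal (· ∈ diffSets db) D} := by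
  ext D
  exact ⟨fun hD => ⟨hD.1, fun D' hD' hD'D => (hD.2 D' hD' hD'D).ge⟩,
    fun hD => ⟨hD.prop, fun D' hD' hD'D => hD.eq_of_le hD' hD'D⟩⟩

theorem diffSets_finite {R V : Type*} {db : Set (R → V)} (hfin : db.Finite) :
    (diffSets db).Finite :=
  (hfin.image2 diffSet hfin).subset fun _ ⟨r, hr, s, hs, _, hD⟩ => ⟨r, hr, s, hs, hD.symm⟩

theorem isUCC_iff_isHittingSet_diffSets {R V : Type*} (db : Set (R → V)) (U : Set R) :
    IsUCC db U ↔ IsHittingSet (diffSets db) U := by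
  constructor
  · rintro hU D ⟨r, hr, s, hs, hrs, rfl⟩
    by_contra hdisj
    exact hrs (hU r hr s hs fun a ha => not_not.1 fun hne => hdisj ⟨a, ha, hne⟩)
  · intro hU r hr s hs hagree
    by_contra hrs
    obtain ⟨a, ha, hne⟩ := hU _ ⟨r, hr, s, hs, hrs, rfl⟩
    exact hne (hagree a ha)

theorem isUCC_iff_isHittingSet_minDiffSets {R V : Type*} {db : Set (R → V)} (hfin : db.Finite)
    (U : Set R) : IsUCC db U ↔ IsHittingSet (minDiffSets db) U := by
  rw [minDiffSets_eq_setOf_minimal, isHittingSet_setOf_minimal_iff (diffSets_finite hfin).isPWO,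
    isUCC_iff_isHittingSet_diffSets]

/-- A set `U ⊆ R` is an inclusion-wise minimal unique column combination of a database `𝔯`
if and only if `U` is a minimal hitting set of the hypergraph of inclusion-wise minimal
difference sets of `𝔯`. -/
theorem minUCC_iff_minHittingSet_minDiffSets {R V : Type*} (db : Set (R → V))
    (hfin : db.Finite) (U : Set R) :
    IsMinUCC db U ↔ IsMinHittingSet (minDiffSets db) U := by
  simp only [IsMinUCC, IsMinHittingSet, isUCC_iff_isHittingSet_minDiffSets hfin]
end

section
/- Let ℋ = {E_1, …, E_m} be a finite Sperner hypergraph on a finite vertex set V all of whose edges are nonempty. Define a relational database 𝔯 over schema V with values in ℕ consisting of the row r_0 with r_0(a) = 0 for all a ∈ V and, for each i ∈ {1,…,m}, the row r_i with r_i(a) = i if a ∈ E_i and r_i(a) = 0 otherwise. Then the inclusion-wise minimal difference sets of 𝔯 are exactly the edges of ℋ; consequently, for every k, ℋ has a hitting set of cardinality k if and only if 𝔯 has a unique column combination of cardinality k. -/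
open scoped Classical

/-- The row `r_i` of the reduction: value `i` (encoded as `(i : ℕ) + 1 ∈ {1, …, m}`)
on the attributes of the edge `E i` and value `0` elsewhere. -/
noncomputable def hsRow {V : Type*} {m : ℕ} (E : Fin m → Set V) (i : Fin m) : V → ℕ :=
  fun a => if a ∈ E i then (i : ℕ) + 1 else 0

/-- The database of the reduction: the all-zero row `r_0` together with the rows
`r_1, …, r_m` corresponding to the edges `E_1, …, E_m`. -/
noncomputable def hsDb {V : Type*} {m : ℕ} (E : Fin m → Set V) : Set (V → ℕ) :=
  insert (fun _ => 0) (Set.range (hsRow E))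

section Aux
variable {V : Type*} {m : ℕ} (E : Fin m → Set V)

lemma diffSet_zero_hsRow (i : Fin m) :
    diffSet (fun _ => (0:ℕ)) (hsRow E i) = E i := by
  ext a
  simp only [diffSet, hsRow, Set.mem_setOf_eq]
  split <;> simp_all

lemma hsRow_ne_zero (hne : ∀ i, (E i).Nonempty) (i : Fin m) :
    hsRow E i ≠ fun _ => (0:ℕ) := by
  obtain ⟨a, ha⟩ := hne i
  intro h
  have := congrFun h a
  simp [hsRow, ha] at this

lemma diffSet_hsRow (i j : Fin m) (hij : i ≠ j) :
    diffSet (hsRow E i) (hsRow E j) = E i ∪ E j := by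
  ext a
  simp only [diffSet, hsRow, Set.mem_setOf_eq, Set.mem_union]
  have hv : (i : ℕ) ≠ (j : ℕ) := fun h => hij (Fin.ext h)
  by_cases hi : a ∈ E i <;> by_cases hj : a ∈ E j <;> simp [hi, hj, hv]

lemma edge_mem_diffSets (hne : ∀ i, (E i).Nonempty) (i : Fin m) :
    E i ∈ diffSets (hsDb E) := by
  refine ⟨fun _ => 0, Or.inl rfl, hsRow E i, Or.inr ⟨i, rfl⟩,
    fun h => hsRow_ne_zero E hne i h.symm, (diffSet_zero_hsRow E i).symm⟩

lemma diffSets_subset (hne : ∀ i, (E i).Nonempty) :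
    ∀ D ∈ diffSets (hsDb E), ∃ i j : Fin m, D = E i ∪ E j := by
  rintro D ⟨r, hr, s, hs, hrs, rfl⟩
  rcases hr with rfl | ⟨i, rfl⟩ <;> rcases hs with rfl | ⟨j, rfl⟩
  · exact absurd rfl hrs
  · exact ⟨j, j, by rw [diffSet_zero_hsRow]; simp⟩
  · refine ⟨i, i, ?_⟩
    have : diffSet (hsRow E i) (fun _ => (0:ℕ)) = diffSet (fun _ => (0:ℕ)) (hsRow E i) := by
      ext a; simp [diffSet, ne_comm]
    rw [this, diffSet_zero_hsRow]; simp
  · have hij : i ≠ j := fun h => hrs (by rw [h])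
    exact ⟨i, j, diffSet_hsRow E i j hij⟩

lemma isUCC_iff_hitting (db : Set (V → ℕ)) (U : Set V) :
    IsUCC db U ↔ IsHittingSet (diffSets db) U := by
  constructor
  · rintro h D ⟨r, hr, s, hs, hrs, rfl⟩
    by_contra hemp
    refine hrs (h r hr s hs fun a ha => ?_)
    by_contra hne
    exact hemp ⟨a, ha, hne⟩
  · intro h r hr s hs hU
    by_contra hrs
    obtain ⟨a, haU, haD⟩ := h (diffSet r s) ⟨r, hr, s, hs, hrs, rfl⟩
    exact haD (hU a haU)

end Aux

/-- Let `ℋ = {E_1, …, E_m}` be a finite Sperner hypergraph on a finite vertex set `V`,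
all of whose edges are nonempty, and let `𝔯` be the database built from it (one all-zero
row `r_0`, and for each edge `E_i` a row `r_i` with value `i` on `E_i` and `0` elsewhere).
Then the inclusion-wise minimal difference sets of `𝔯` are exactly the edges of `ℋ`;
consequently, for every `k`, `ℋ` has a hitting set of cardinality `k` iff `𝔯` has a
unique column combination of cardinality `k`. -/

theorem minDiffSets_hsDb_eq_and_hittingSet_iff_ucc {V : Type*} [Fintype V] (m : ℕ)
    (E : Fin m → Set V) (hSperner : ∀ i j, E i ⊆ E j → E i = E j)
    (hne : ∀ i, (E i).Nonempty) :
    minDiffSets (hsDb E) = Set.range E ∧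
      ∀ k : ℕ,
        (∃ T : Set V, IsHittingSet (Set.range E) T ∧ T.ncard = k) ↔
          (∃ U : Set V, IsUCC (hsDb E) U ∧ U.ncard = k) := by
  have hmin : minDiffSets (hsDb E) = Set.range E := by
    ext D
    constructor
    · rintro ⟨hD, hminD⟩
      obtain ⟨i, j, rfl⟩ := diffSets_subset E hne D hD
      exact ⟨i, (hminD (E i) (edge_mem_diffSets E hne i) Set.subset_union_left)⟩
    · rintro ⟨i, rfl⟩
      refine ⟨edge_mem_diffSets E hne i, fun D' hD' hsub => ?_⟩
      obtain ⟨k, l, rfl⟩ := diffSets_subset E hne D' hD'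
      have hk := hSperner k i (Set.subset_union_left.trans hsub)
      have hl := hSperner l i (Set.subset_union_right.trans hsub)
      rw [hk, hl, Set.union_self]
  have hucc : ∀ U : Set V, IsUCC (hsDb E) U ↔ IsHittingSet (Set.range E) U := by
    intro U
    rw [isUCC_iff_hitting]
    constructor
    · rintro h D ⟨i, rfl⟩
      exact h _ (edge_mem_diffSets E hne i)
    · intro h D hD
      obtain ⟨i, j, rfl⟩ := diffSets_subset E hne D hD
      obtain ⟨a, ha, haE⟩ := h (E i) ⟨i, rfl⟩
      exact ⟨a, ha, Or.inl haE⟩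
  refine ⟨hmin, fun k => ?_⟩
  constructor
  · rintro ⟨T, hT, rfl⟩
    exact ⟨T, (hucc T).mpr hT, rfl⟩
  · rintro ⟨U, hU, rfl⟩
    exact ⟨U, (hucc U).mp hU, rfl⟩
end

section
/- Let 𝔯 be a nonempty relational database over a finite schema R, let a ∈ R, fix a row r* ∈ 𝔯, and let × be a value not occurring anywhere in 𝔯. Define 𝔯' = 𝔯 ∪ {r_b : b ∈ R, b ≠ a}, where r_b(b) = × and r_b(c) = r*(c) for all c ≠ b. Then: (i) for every b ∈ R with b ≠ a and every X ⊆ R with b ∉ X, the functional dependency X → b fails in 𝔯'; and (ii) for every X ⊆ R with a ∉ X, the functional dependency X → a holds in 𝔯 if and only if it holds in 𝔯'. -/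
open scoped Classical

/-- The functional dependency `X → a` holds in `db`: any two rows that agree on every
attribute of `X` also agree on `a`. -/
def FDHolds {R V : Type*} (db : Set (R → V)) (X : Set R) (a : R) : Prop :=
  ∀ r ∈ db, ∀ s ∈ db, (∀ b ∈ X, r b = s b) → r a = s a

/-- The row `r_b` of the reduction: the value `×` in column `b`
and the values of `r*` in all other columns. -/
noncomputable def maskRow {R V : Type*} (rstar : R → V) (x : V) (b : R) : R → V :=
  fun c => if c = b then x else rstar c

/-- The extended database `𝔯' = 𝔯 ∪ {r_b : b ∈ R, b ≠ a}`. -/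
noncomputable def maskDb {R V : Type*} (db : Set (R → V)) (a : R) (rstar : R → V)
    (x : V) : Set (R → V) :=
  db ∪ {r | ∃ b, b ≠ a ∧ r = maskRow rstar x b}

/-- Let `𝔯` be a nonempty database over a finite schema `R`, let `a ∈ R`, fix `r* ∈ 𝔯`,
and let `×` be a value not occurring anywhere in `𝔯`. Let
`𝔯' = 𝔯 ∪ {r_b : b ≠ a}` where `r_b(b) = ×` and `r_b(c) = r*(c)` for `c ≠ b`. Then:
(i) for every `b ≠ a` and every `X` with `b ∉ X`, the FD `X → b` fails in `𝔯'`; and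
(ii) for every `X` with `a ∉ X`, the FD `X → a` holds in `𝔯` iff it holds in `𝔯'`. -/
theorem maskDb_kills_other_fds_and_preserves_fd_to_a {R V : Type*} [Finite R]
    (db : Set (R → V)) (hfin : db.Finite) (hne : db.Nonempty)
    (a : R) (rstar : R → V) (hstar : rstar ∈ db)
    (x : V) (hfresh : ∀ r ∈ db, ∀ c, r c ≠ x) :
    (∀ b : R, b ≠ a → ∀ X : Set R, b ∉ X → ¬ FDHolds (maskDb db a rstar x) X b) ∧
      (∀ X : Set R, a ∉ X → (FDHolds db X a ↔ FDHolds (maskDb db a rstar x) X a)) := by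
  constructor
  · intro b hb X hbX hFD
    have h1 : rstar ∈ maskDb db a rstar x := Or.inl hstar
    have h2 : maskRow rstar x b ∈ maskDb db a rstar x := Or.inr ⟨b, hb, rfl⟩
    have hagree : ∀ c ∈ X, rstar c = maskRow rstar x b c := by
      intro c hc
      have : c ≠ b := fun h => hbX (h ▸ hc)
      simp [maskRow, this]
    have := hFD rstar h1 _ h2 hagree
    simp [maskRow] at this
    exact hfresh rstar hstar b this
  · intro X haX
    constructor
    · intro hFD r hr s hs hagree
      have key : ∀ t ∈ maskDb db a rstar x, ∀ u, u ∈ db → (∀ c ∈ X, t c = u c) → t a = u a := by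
        intro t ht u hu hag
        rcases ht with ht | ⟨b, hb, rfl⟩
        · exact hFD t ht u hu hag
        · by_cases hbX : b ∈ X
          · exact absurd (hag b hbX).symm (by simpa [maskRow] using hfresh u hu b)
          · have : ∀ c ∈ X, rstar c = u c := by
              intro c hc
              have hcb : c ≠ b := fun h => hbX (h ▸ hc)
              simpa [maskRow, hcb] using hag c hc
            have := hFD rstar hstar u hu this
            simpa [maskRow, Ne.symm hb] using this
      rcases hs with hs | ⟨b', hb', rfl⟩
      · exact key r hr _ hs hagree
      · rcases hr with hr | ⟨b, hb, rfl⟩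
        · have := key _ (Or.inr ⟨b', hb', rfl⟩) r hr (fun c hc => (hagree c hc).symm)
          exact this.symm
        · simp [maskRow, Ne.symm hb, Ne.symm hb']
    · intro hFD r hr s hs hagree
      exact hFD r (Or.inl hr) s (Or.inl hs) hagree
end

section
/- Let 𝔯 be a relational database over a finite schema R and let k be a natural number with k < |R|. Then there exist X ⊆ R with |X| = k and a ∈ R \ X such that the functional dependency X → a holds in 𝔯, if and only if there exist disjoint subsets XL, YR ⊆ R with YR nonempty, |XL| + |YR| = k + 1, and such that for every a ∈ YR and all rows r, s ∈ 𝔯 with r(a) ≠ s(a) there exists b ∈ XL with b ≠ a and r(b) ≠ s(b). -/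
/-- Let `𝔯` be a database over a finite schema `R` and `k < |R|`. There exist `X ⊆ R`
with `|X| = k` and `a ∈ R \ X` such that the FD `X → a` holds in `𝔯`, iff there exist
disjoint sets `XL, YR ⊆ R` with `YR` nonempty, `|XL| + |YR| = k + 1`, such that for every
`a ∈ YR` and all rows `r, s ∈ 𝔯` with `r(a) ≠ s(a)` there is `b ∈ XL` with `b ≠ a` and
`r(b) ≠ s(b)` (a weight-`(k+1)` satisfying assignment of the CNF formula of the
reduction). -/
theorem fd_exists_iff_weighted_assignment {R V : Type*} [Fintype R]
    (db : Set (R → V)) (hfin : db.Finite) (k : ℕ) (hk : k < Fintype.card R) :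
    (∃ X : Set R, X.ncard = k ∧ ∃ a ∉ X, FDHolds db X a) ↔
      (∃ XL YR : Set R, Disjoint XL YR ∧ YR.Nonempty ∧ XL.ncard + YR.ncard = k + 1 ∧
        ∀ a ∈ YR, ∀ r ∈ db, ∀ s ∈ db, r a ≠ s a → ∃ b ∈ XL, b ≠ a ∧ r b ≠ s b) := by

  constructor
  · rintro ⟨X, hX, a, haX, hFD⟩
    refine ⟨X, {a}, by simpa [Set.disjoint_singleton_right] using haX,
      ⟨a, rfl⟩, by simp [hX], ?_⟩
    rintro a' ha' r hr s hs hne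
    simp only [Set.mem_singleton_iff] at ha'; subst ha'
    by_contra h
    push_neg at h
    exact hne (hFD r hr s hs fun b hb => h b hb (fun hba => haX (hba ▸ hb)))
  · rintro ⟨XL, YR, hdisj, ⟨a, ha⟩, hcard, hcond⟩
    have hy : 0 < YR.ncard := (Set.ncard_pos (Set.toFinite YR)).mpr ⟨a, ha⟩
    refine ⟨XL ∪ (YR \ {a}), ?_, a, ?_, ?_⟩
    · rw [Set.ncard_union_eq (hdisj.mono_right Set.diff_subset),
        Set.ncard_diff_singleton_of_mem ha]
      omega
    · rintro (h | h)
      · exact Set.disjoint_left.mp hdisj h ha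
      · exact h.2 rfl
    · intro r hr s hs hagree
      by_contra hne
      obtain ⟨b, hb, _, hbne⟩ := hcond a ha r hr s hs hne
      exact hbne (hagree b (Or.inl hb))
end

section
/- Let (𝔯₁, 𝔰₁) and (𝔯₂, 𝔰₂) be two pairs of relational databases over the same schema R such that the set of values occurring in 𝔯₁ ∪ 𝔰₁ is disjoint from the set of values occurring in 𝔯₂ ∪ 𝔰₂. Then for every nonempty X ⊆ R, X is an identity inclusion dependency for (𝔯₁ ∪ 𝔯₂, 𝔰₁ ∪ 𝔰₂) if and only if X is an identity inclusion dependency for both (𝔯₁, 𝔰₁) and (𝔯₂, 𝔰₂). -/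
/-- `X` is an identity inclusion dependency for databases `db1`, `db2` over the same
schema: for every row `r ∈ db1` there is a row `s ∈ db2` agreeing with `r` on `X`. -/
def IsIdIND {R W : Type*} (db1 db2 : Set (R → W)) (X : Set R) : Prop :=
  ∀ r ∈ db1, ∃ s ∈ db2, ∀ a ∈ X, r a = s a

/-- The set of values occurring in the database `db`. -/
def valuesOf {R W : Type*} (db : Set (R → W)) : Set W :=
  {w | ∃ r ∈ db, ∃ a, r a = w}

/-- Let `(𝔯₁, 𝔰₁)` and `(𝔯₂, 𝔰₂)` be pairs of databases over the same schema `R` such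
that the values occurring in `𝔯₁ ∪ 𝔰₁` are disjoint from those occurring in `𝔯₂ ∪ 𝔰₂`.
Then for every nonempty `X ⊆ R`, `X` is an identity inclusion dependency for
`(𝔯₁ ∪ 𝔯₂, 𝔰₁ ∪ 𝔰₂)` iff it is one for both `(𝔯₁, 𝔰₁)` and `(𝔯₂, 𝔰₂)`. -/
theorem idIND_union_iff_of_disjoint_values {R W : Type*}
    (r1 s1 r2 s2 : Set (R → W))
    (hr1 : r1.Finite) (hs1 : s1.Finite) (hr2 : r2.Finite) (hs2 : s2.Finite)
    (hdisj : Disjoint (valuesOf (r1 ∪ s1)) (valuesOf (r2 ∪ s2))) :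
    ∀ X : Set R, X.Nonempty →
      (IsIdIND (r1 ∪ r2) (s1 ∪ s2) X ↔ (IsIdIND r1 s1 X ∧ IsIdIND r2 s2 X)) := by
  intro X ⟨a, ha⟩
  constructor
  · intro h
    constructor
    · intro r hr
      obtain ⟨s, hs, hag⟩ := h r (Or.inl hr)
      rcases hs with hs | hs
      · exact ⟨s, hs, hag⟩
      · exact absurd (hag a ha) (hdisj.ne_of_mem
          ⟨r, Or.inl hr, a, rfl⟩ ⟨s, Or.inr hs, a, rfl⟩)
    · intro r hr
      obtain ⟨s, hs, hag⟩ := h r (Or.inr hr)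
      rcases hs with hs | hs
      · exact absurd (hag a ha) (hdisj.symm.ne_of_mem
          ⟨r, Or.inl hr, a, rfl⟩ ⟨s, Or.inr hs, a, rfl⟩)
      · exact ⟨s, hs, hag⟩
  · rintro ⟨h1, h2⟩ r (hr | hr)
    · obtain ⟨s, hs, hag⟩ := h1 r hr
      exact ⟨s, Or.inl hs, hag⟩
    · obtain ⟨s, hs, hag⟩ := h2 r hr
      exact ⟨s, Or.inr hs, hag⟩
end
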